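/- Let λ be a partition with r rows and c columns, t = r + c, A its set of first-column hook lengths and A′ the complement of A in {0,…,t−1}. Define the ∞-partition E_∞(λ) of height t with characteristic set C = {a + t + 1 : a ∈ A} ∪ {a′ + 1 : a′ ∈ A′}. Then the multiset of missing hook numbers of E_∞(λ), namely the multiset of all positive differences {c_1 − c_2 : c_1, c_2 ∈ C, c_1 > c_2}, is determined by the hook-length multiset H(λ) alone; in particular, if μ is another partition with H(μ) = H(λ) (with the same t), then E_∞(λ) and E_∞(μ) have equal missing-hook-number multisets. -/

import Mathlib

/-- A partition: a weakly decreasing list of positive integers. -/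
def IsPartition (l : List ℕ) : Prop :=
  l.Pairwise (· ≥ ·) ∧ ∀ x ∈ l, 0 < x

/-- Hook length of the box in row `i`, column `j` (0-indexed):
arm (number of boxes strictly to the right) + leg (boxes strictly below) + 1. -/
def hook (l : List ℕ) (i j : ℕ) : ℕ :=
  (l.getD i 0 - j) + ((Finset.range l.length).filter (fun k => i < k ∧ j < l.getD k 0)).card

/-- The multiset of all hook lengths of a partition. -/
def hookMultiset (l : List ℕ) : Multiset ℕ :=
  ↑((List.range l.length).flatMap fun i => (List.range (l.getD i 0)).map fun j => hook l i j)

/-- The set of first-column hook lengths. -/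
def firstColHooks (l : List ℕ) : Finset ℕ :=
  (Finset.range l.length).image fun i => hook l i 0

/-- The multiset `{s - t : s ∈ S, t ∈ T, s > t}`. -/
def posDiffs (S T : Finset ℕ) : Multiset ℕ :=
  ((S ×ˢ T).filter fun q => q.2 < q.1).val.map fun q => q.1 - q.2

/-- The remnant of a partition: the complement in the `r × c` rectangle, rotated 180°. -/
def remnant (l : List ℕ) : List ℕ :=
  ((l.reverse).map fun x => l.headD 0 - x).filter fun x => decide (0 < x)

/-- The front section of the first `p` rows: delete all full-height columns but the rightmost. -/
def frontSection (l : List ℕ) (p : ℕ) : List ℕ :=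
  (l.take p).map fun v => v + 1 - l.getD (p - 1) 0

/-- The extension `λ_p - λ_{p+1}` of a partition with respect to period `p`. -/
def extension (l : List ℕ) (p : ℕ) : ℕ :=
  l.getD (p - 1) 0 - l.getD p 0

/-- The multiset of differences `{c_i - c_j : i < j}` of a (decreasing) list. -/
def listDiffs (ch : List ℕ) : Multiset ℕ :=
  ↑((List.range ch.length).flatMap fun i =>
    ((List.range ch.length).filter fun j => decide (i < j)).map fun j => ch.getD i 0 - ch.getD j 0)

/-- The characteristic of a front section: its first-column hook lengths. -/
def charList (fs : List ℕ) : List ℕ :=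
  (List.range fs.length).map fun i => hook fs i 0

/-- The multiset of missing hook numbers of the ∞-partition formed from the top `p` rows. -/
def missingHooks (l : List ℕ) (p : ℕ) : Multiset ℕ :=
  listDiffs (charList (frontSection l p))

/-- Reconstruct a partition from a `p`-partition datum: front section `fs` atop
remainder `rem`, with extension `x`. -/
def assemble (fs rem : List ℕ) (x : ℕ) : List ℕ :=
  (fs.map fun v => v + (rem.headD 0 + x) - 1) ++ rem

/-- Increment the first `p` parts of `l` by `n`. -/
def bump (l : List ℕ) (p n : ℕ) : List ℕ :=
  ((l.take p).map fun v => v + n) ++ l.drop p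

/-- The difference multiset `{a i - a j : 1 ≤ i < j ≤ p}` of a (1-indexed) sequence. -/
def seqDiffs (a : ℕ → ℕ) (p : ℕ) : Multiset ℕ :=
  ((Finset.Icc 1 p ×ˢ Finset.Icc 1 p).filter fun q => q.1 < q.2).val.map fun q => a q.1 - a q.2

/-- Multiplicity of `m` among the hook lengths of the ∞-partition with front section `f`:
the number of rows `i` containing a box (possibly at a negative column `j`) of hook length `m`. -/
noncomputable def infMult (f : List ℕ) (m : ℕ) : ℕ :=
  Set.ncard {i : ℕ | i < f.length ∧ ∃ j : ℤ, j < (f.getD i 0 : ℤ) ∧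
    ((f.getD i 0 : ℤ) - j) +
      (((Finset.range f.length).filter fun k => i < k ∧ j < (f.getD k 0 : ℤ)).card : ℤ) = (m : ℤ)}

/-- The characteristic set of the enveloping ∞-partition `E∞(λ)`:
`{a + t + 1 : a ∈ A} ∪ {a' + 1 : a' ∈ A'}`. -/
def envChar (l : List ℕ) : Finset ℕ :=
  ((firstColHooks l).image fun a => a + (l.length + l.headD 0) + 1) ∪
  (((Finset.range (l.length + l.headD 0)) \ firstColHooks l).image fun a => a + 1)

/-- The missing-hook-number multiset of `E∞(λ)`: all positive pairwise differences
of the characteristic set. -/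
def envMissing (l : List ℕ) : Multiset ℕ := posDiffs (envChar l) (envChar l)

/-- Number of parts of `l` exceeding `j`: the `(j+1)`-st part of the conjugate. -/
def conjPart (l : List ℕ) (j : ℕ) : ℕ :=
  ((Finset.range l.length).filter fun k => j < l.getD k 0).card

/-- The enveloping partition `E(λ)`: a `t × t` square with the rotated reflection of `λ`
removed from the bottom-right, and copies of `λ` adjoined top-right and bottom-left. -/
def envelope (l : List ℕ) : List ℕ :=
  (l.map fun v => v + (l.length + l.headD 0)) ++
  ((List.range (l.headD 0)).map fun i =>
    (l.length + l.headD 0) - conjPart l (l.headD 0 - 1 - i)) ++ l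

/-- Iteratively stack `d` copies of the front section `fs` atop `rem`, with extensions `x i`. -/
def stack (fs rem : List ℕ) (x : ℕ → ℕ) : ℕ → List ℕ
  | 0 => rem
  | (i + 1) => assemble fs (stack fs rem x i) (x (i + 1))

/-!
Write `t = r + c`, `A` for the first-column hook lengths of `λ` and `A' = range t \ A`.
The box `(i, j)` of `λ` has hook length `h(i, 0) - g j` with `g j = j + r - λ'_j`, and `g` maps
the columns bijectively onto `A'`; so `H(λ)` is the multiset of differences `a - a' > 0` with
`a ∈ A`, `a' ∈ A'`. Let `X w` be the multiplicity of `w` in it and `Y w = #{a ∈ A | a + w ∈ A'}`.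
In `C = (A + t + 1) ∪ (A' + 1)` a difference `v ≥ t` occurs `X (v - t)` times, and `v < t` occurs
`t - v - X v - Y v + Y (t - v)` times, since the `t - v` pairs at distance `v` in `range t` split
into `A`–`A`, `A`–`A'`, `A'`–`A`, `A'`–`A'` pairs. Finally `Y v - X v = Y (t - v) - X (t - v)`,
because `#{a ∈ A | a + v < t} + #{a ∈ A | t - v ≤ a} = #A` for `v` and for `t - v`; so everything is determined by `X`.
-/

open Finset

lemma posDiffs_eq_bind (S T : Finset ℕ) :
    posDiffs S T = S.val.bind fun a => (T.val.filter (· < a)).map (a - ·) := by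
  rw [posDiffs, filter_val, product_val]
  change Multiset.map _ (Multiset.filter _ (S.val.bind fun a => T.val.map (Prod.mk a))) = _
  rw [Multiset.filter_bind, Multiset.map_bind]
  refine Multiset.bind_congr fun a _ => ?_
  rw [Multiset.filter_map, Multiset.map_map]
  rfl

lemma conjPart_le_length (l : List ℕ) (j : ℕ) : conjPart l j ≤ l.length :=
  (card_filter_le _ _).trans (card_range _).le

lemma antitone_conjPart (l : List ℕ) : Antitone (conjPart l) :=
  fun _ _ h => card_le_card (monotone_filter_right _ fun _ _ hk => lt_of_le_of_lt h hk)

def firstColGap (l : List ℕ) (j : ℕ) : ℕ := j + l.length - conjPart l j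

lemma firstColGap_strictMono (l : List ℕ) : StrictMono (firstColGap l) := fun j j' h => by
  have := antitone_conjPart l h.le
  have := conjPart_le_length l j
  unfold firstColGap
  omega

namespace IsPartition

variable {l : List ℕ} (hl : IsPartition l)
include hl

lemma antitone_getD : Antitone (l.getD · 0) := by
  intro i j hij
  by_cases hj : j < l.length
  · rcases hij.eq_or_lt with rfl | h
    · rfl
    · simp only [List.getD_eq_getElem _ _ hj, List.getD_eq_getElem _ _ (h.trans hj)]
      exact List.pairwise_iff_getElem.1 hl.1 i j (h.trans hj) hj h
  · simp only [List.getD_eq_default _ _ (not_lt.1 hj), Nat.zero_le]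

lemma getD_pos {i : ℕ} (hi : i < l.length) : 0 < l.getD i 0 := by
  rw [List.getD_eq_getElem _ _ hi]
  exact hl.2 _ (List.getElem_mem hi)

lemma lt_getD_iff_lt_conjPart {j k : ℕ} : j < l.getD k 0 ↔ k < conjPart l j := by
  constructor
  · intro h
    have hk : k < l.length := by
      by_contra hk
      rw [List.getD_eq_default _ _ (not_lt.1 hk)] at h
      exact Nat.not_lt_zero _ h
    have hsub : range (k + 1) ⊆ {k' ∈ range l.length | j < l.getD k' 0} := fun k' hk' => by
      rw [mem_range] at hk'
      exact mem_filter.2 ⟨mem_range.2 (by omega),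
        lt_of_lt_of_le h (hl.antitone_getD (Nat.lt_succ_iff.1 hk'))⟩
    have := card_le_card hsub
    rwa [card_range] at this
  · intro h
    by_contra h'
    have hsub : {k' ∈ range l.length | j < l.getD k' 0} ⊆ range k := fun k' hk' => by
      rw [mem_filter] at hk'
      by_contra hk
      exact h' (lt_of_lt_of_le hk'.2 (hl.antitone_getD (not_lt.1 (mt mem_range.2 hk))))
    simpa [conjPart] using lt_of_lt_of_le h (card_le_card hsub)

lemma hook_eq (i j : ℕ) : hook l i j = l.getD i 0 - j + (conjPart l j - i - 1) := by
  have hleg : {k ∈ range l.length | i < k ∧ j < l.getD k 0} = Ioo i (conjPart l j) := by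
    ext k
    simp only [mem_filter, mem_range, mem_Ioo, hl.lt_getD_iff_lt_conjPart]
    have := conjPart_le_length l j
    omega
  rw [hook, hleg, Nat.card_Ioo]

lemma conjPart_zero : conjPart l 0 = l.length := by
  rw [conjPart, filter_true_of_mem fun i hi => hl.getD_pos (mem_range.1 hi), card_range]

lemma hook_zero (i : ℕ) : hook l i 0 = l.getD i 0 + (l.length - i - 1) := by
  rw [hl.hook_eq, hl.conjPart_zero, Nat.sub_zero]

lemma firstColGap_lt_hook_zero {i j : ℕ} (hj : j < l.getD i 0) :
    firstColGap l j < hook l i 0 := by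
  have := hl.lt_getD_iff_lt_conjPart.1 hj
  have := conjPart_le_length l j
  rw [hl.hook_zero, firstColGap]
  omega

lemma hook_zero_lt_firstColGap {i j : ℕ} (hi : i < l.length) (hj : l.getD i 0 ≤ j) :
    hook l i 0 < firstColGap l j := by
  have : conjPart l j ≤ i := not_lt.1 (mt hl.lt_getD_iff_lt_conjPart.2 (not_lt.2 hj))
  rw [hl.hook_zero, firstColGap]
  omega

lemma hook_eq_hook_zero_sub {i j : ℕ} (hj : j < l.getD i 0) :
    hook l i j = hook l i 0 - firstColGap l j := by
  have := hl.lt_getD_iff_lt_conjPart.1 hj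
  have := conjPart_le_length l j
  rw [hl.hook_eq, hl.hook_zero, firstColGap]
  omega

lemma strictAntiOn_hook_zero : StrictAntiOn (hook l · 0) (range l.length) := by
  intro i hi i' hi' h
  have : l.getD i' 0 ≤ l.getD i 0 := hl.antitone_getD h.le
  simp only [mem_coe, mem_range] at hi hi'
  simp only [hl.hook_zero]
  omega

lemma card_firstColHooks : #(firstColHooks l) = l.length := by
  rw [firstColHooks, card_image_of_injOn hl.strictAntiOn_hook_zero.injOn, card_range]

lemma firstColHooks_subset_range : firstColHooks l ⊆ range (l.length + l.headD 0) := by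
  intro a ha
  obtain ⟨i, hi, rfl⟩ := mem_image.1 ha
  have : l.getD i 0 ≤ l.getD 0 0 := hl.antitone_getD (Nat.zero_le i)
  rw [mem_range] at hi ⊢
  rw [hl.hook_zero, List.headD_eq_getD]
  omega

lemma range_sdiff_firstColHooks :
    range (l.length + l.headD 0) \ firstColHooks l = (range (l.headD 0)).image (firstColGap l) := by
  symm
  apply eq_of_subset_of_card_le
  · intro g hg
    obtain ⟨j, hj, rfl⟩ := mem_image.1 hg
    rw [mem_range, List.headD_eq_getD] at hj
    rw [mem_sdiff, mem_range, List.headD_eq_getD]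
    refine ⟨?_, fun hA => ?_⟩
    · have := hl.lt_getD_iff_lt_conjPart.1 hj
      unfold firstColGap
      omega
    · obtain ⟨i, hi, he⟩ := mem_image.1 hA
      rcases lt_or_ge j (l.getD i 0) with h | h
      · exact (hl.firstColGap_lt_hook_zero h).ne' he
      · exact (hl.hook_zero_lt_firstColGap (mem_range.1 hi) h).ne he
  · rw [card_sdiff_of_subset hl.firstColHooks_subset_range, card_range, hl.card_firstColHooks,
      card_image_of_injective _ (firstColGap_strictMono l).injective, card_range]
    omega

theorem hookMultiset_eq_posDiffs :
    hookMultiset l =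
      posDiffs (firstColHooks l) (range (l.length + l.headD 0) \ firstColHooks l) := by
  rw [posDiffs_eq_bind, hl.range_sdiff_firstColHooks, firstColHooks,
    image_val_of_injOn hl.strictAntiOn_hook_zero.injOn,
    image_val_of_injOn (firstColGap_strictMono l).injective.injOn, Multiset.bind_map,
    hookMultiset, ← Multiset.coe_bind, range_val, Multiset.range]
  refine Multiset.bind_congr fun i hi => ?_
  replace hi : i < l.length := by simpa using hi
  have hrow : (range (l.headD 0)).val.filter ((· < hook l i 0) ∘ firstColGap l) =
      (range (l.getD i 0)).val := by
    rw [← filter_val]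
    congr 1
    ext j
    simp only [mem_filter, mem_range, Function.comp]
    constructor
    · rintro ⟨-, hlt⟩
      by_contra h
      exact (hl.hook_zero_lt_firstColGap hi (not_lt.1 h)).not_gt hlt
    · intro hj
      rw [List.headD_eq_getD]
      exact ⟨lt_of_lt_of_le hj (hl.antitone_getD (Nat.zero_le i)), hl.firstColGap_lt_hook_zero hj⟩
  rw [Multiset.filter_map, Multiset.map_map, hrow, ← Multiset.map_coe, range_val, Multiset.range]
  exact Multiset.map_congr rfl fun j hj => hl.hook_eq_hook_zero_sub (by simpa using hj)

end IsPartition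

def shiftCount (S T : Finset ℕ) (v : ℕ) : ℕ := #{x ∈ S | x + v ∈ T}

lemma count_posDiffs (S T : Finset ℕ) {v : ℕ} (hv : 0 < v) :
    (posDiffs S T).count v = shiftCount T S v := by
  rw [posDiffs, Multiset.count_map, filter_val, Multiset.filter_filter, ← filter_val,
    Finset.card_val, shiftCount]
  refine card_nbij' Prod.snd (fun x => (x + v, x)) ?_ ?_ ?_ ?_
  · intro q hq
    simp only [mem_product, mem_coe, mem_filter] at hq ⊢
    exact ⟨hq.1.2, by rw [show q.2 + v = q.1 by omega]; exact hq.1.1⟩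
  · intro x hx
    simp only [mem_product, mem_coe, mem_filter] at hx ⊢
    exact ⟨⟨hx.2, hx.1⟩, by omega, by omega⟩
  · intro q hq
    simp only [mem_product, mem_coe, mem_filter] at hq
    exact Prod.ext (by simp only; omega) rfl
  · intro x _
    rfl

lemma posDiffs_eq_of_shiftCount {S T S' T' : Finset ℕ}
    (h : ∀ v, 0 < v → shiftCount T S v = shiftCount T' S' v) :
    posDiffs S T = posDiffs S' T' := by
  have count_zero : ∀ S T : Finset ℕ, (posDiffs S T).count 0 = 0 := fun S T => by
    simp only [posDiffs, Multiset.count_eq_zero, Multiset.mem_map, mem_val, mem_filter]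
    omega
  ext v
  rcases v.eq_zero_or_pos with rfl | hv
  · rw [count_zero, count_zero]
  · rw [count_posDiffs _ _ hv, count_posDiffs _ _ hv, h v hv]

lemma shiftCount_zero_of_disjoint {S T : Finset ℕ} (h : Disjoint S T) : shiftCount S T 0 = 0 := by
  simpa [shiftCount] using fun x hx => disjoint_left.1 h hx

lemma shiftCount_eq_zero_of_subset_range (S : Finset ℕ) {T : Finset ℕ} {v : ℕ}
    (hT : T ⊆ range v) : shiftCount S T v = 0 := by
  rw [shiftCount, card_eq_zero, filter_eq_empty_iff]
  intro x _ hx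
  have := mem_range.1 (hT hx)
  omega

lemma shiftCount_union_left {S S' : Finset ℕ} (T : Finset ℕ) (v : ℕ) (h : Disjoint S S') :
    shiftCount (S ∪ S') T v = shiftCount S T v + shiftCount S' T v := by
  rw [shiftCount, filter_union]
  exact card_union_of_disjoint (disjoint_filter_filter h)

lemma shiftCount_union_right (S : Finset ℕ) {T T' : Finset ℕ} (v : ℕ) (h : Disjoint T T') :
    shiftCount S (T ∪ T') v = shiftCount S T v + shiftCount S T' v := by
  simp only [shiftCount, mem_union, filter_or]
  exact card_union_of_disjoint (disjoint_filter.2 fun _ _ h₁ h₂ => disjoint_left.1 h h₁ h₂)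

lemma shiftCount_image_add_left (S T : Finset ℕ) (k v : ℕ) :
    shiftCount (S.image (· + k)) T v = shiftCount S T (k + v) := by
  rw [shiftCount, filter_image, card_image_of_injective _ (add_left_injective k)]
  simp only [shiftCount, add_assoc]

lemma shiftCount_image_add_right_of_le (S T : Finset ℕ) {k v : ℕ} (h : k ≤ v) :
    shiftCount S (T.image (· + k)) v = shiftCount S T (v - k) := by
  refine congrArg card (filter_congr fun x _ => ?_)
  simp only [mem_image]
  constructor
  · rintro ⟨y, hy, hxy⟩
    rwa [show x + (v - k) = y by omega]
  · exact fun hx => ⟨_, hx, by omega⟩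

lemma shiftCount_image_add_right_of_ge (S T : Finset ℕ) {k v : ℕ} (h : v ≤ k) :
    shiftCount S (T.image (· + k)) v = shiftCount T S (k - v) := by
  refine card_nbij' (fun x => x + v - k) (fun y => y + (k - v)) ?_ ?_ ?_ ?_
  · intro x hx
    simp only [mem_image, mem_coe, mem_filter] at hx ⊢
    obtain ⟨hx, y, hy, hxy⟩ := hx
    rw [show x + v - k = y by omega, show y + (k - v) = x by omega]
    exact ⟨hy, hx⟩
  · intro y hy
    simp only [mem_image, mem_coe, mem_filter] at hy ⊢
    exact ⟨hy.2, y, hy.1, by omega⟩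
  · intro x hx
    simp only [mem_image, mem_coe, mem_filter] at hx
    obtain ⟨-, y, -, hxy⟩ := hx
    simp only
    omega
  · intro y _
    simp only
    omega

lemma shiftCount_range_range (t v : ℕ) : shiftCount (range t) (range t) v = t - v := by
  rw [shiftCount, show {x ∈ range t | x + v ∈ range t} = range (t - v) by ext; simp only [mem_filter, mem_range]; omega,
    card_range]

lemma shiftCount_add_shiftCount_range {S : Finset ℕ} {t v : ℕ} (hS : S ⊆ range t) (hv : v ≤ t) :
    shiftCount S (range t) v + shiftCount (range t) S (t - v) = #S := by
  have hleft : shiftCount (range t) S (t - v) = #{x ∈ S | ¬ x + v < t} := by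
    refine card_nbij' (· + (t - v)) (· - (t - v)) ?_ ?_ ?_ ?_
    · intro x hx
      simp only [mem_range, mem_coe, mem_filter] at hx ⊢
      exact ⟨hx.2, by omega⟩
    · intro y hy
      simp only [mem_range, mem_coe, mem_filter] at hy ⊢
      have := mem_range.1 (hS hy.1)
      exact ⟨by omega, by rw [Nat.sub_add_cancel (by omega)]; exact hy.1⟩
    · intro x _
      simp
    · intro y hy
      simp only [mem_coe, mem_filter] at hy
      simp only
      omega
  rw [hleft, shiftCount]
  simp only [mem_range]
  exact card_filter_add_card_filter_not _

-- `envChar l` is `charSet (l.length + l.headD 0) (firstColHooks l)` by definition.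
def charSet (t : ℕ) (B : Finset ℕ) : Finset ℕ :=
  (B.image fun a => a + t + 1) ∪ ((range t \ B).image fun a => a + 1)

lemma shiftCount_charSet (t : ℕ) (B : Finset ℕ) (v : ℕ) :
    shiftCount (charSet t B) (charSet t B) v =
      shiftCount B B v + shiftCount (range t \ B) (range t \ B) v +
        shiftCount (range t \ B) (B.image (· + (t + 1))) (1 + v) := by
  set Bc := range t \ B
  set Hi := B.image (· + (t + 1))
  set Lo := Bc.image (· + 1)
  have hC : charSet t B = Hi ∪ Lo := by simp only [charSet, Hi, Lo, Bc, add_assoc]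
  have hBc : Bc ⊆ range t := sdiff_subset
  have hdisj : Disjoint Hi Lo := by
    simp only [Hi, Lo, disjoint_left, mem_image]
    rintro _ ⟨a, -, rfl⟩ ⟨b, hb, hab⟩
    have := mem_range.1 (hBc hb)
    omega
  have hHiHi : shiftCount Hi Hi v = shiftCount B B v := by
    rw [shiftCount_image_add_left, shiftCount_image_add_right_of_le _ _ (by omega),
      Nat.add_sub_cancel_left]
  have hHiLo : shiftCount Hi Lo v = 0 := by
    rw [shiftCount_image_add_left, shiftCount_image_add_right_of_le _ _ (by omega)]
    exact shiftCount_eq_zero_of_subset_range _ (hBc.trans (range_subset_range.2 (by omega)))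
  have hLoLo : shiftCount Lo Lo v = shiftCount Bc Bc v := by
    rw [shiftCount_image_add_left, shiftCount_image_add_right_of_le _ _ (by omega),
      Nat.add_sub_cancel_left]
  rw [hC, shiftCount_union_left _ _ hdisj, shiftCount_union_right _ _ hdisj,
    shiftCount_union_right _ _ hdisj, hHiHi, hHiLo, hLoLo, shiftCount_image_add_left]
  ring

section charSet

variable {t : ℕ} {B : Finset ℕ}

lemma shiftCount_charSet_of_le (hB : B ⊆ range t) {v : ℕ} (hv : v ≤ t) :
    shiftCount (charSet t B) (charSet t B) v + 2 * shiftCount (range t \ B) B v =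
      t - v + shiftCount (range t \ B) B (t - v) := by
  rw [shiftCount_charSet, shiftCount_image_add_right_of_ge _ _ (show 1 + v ≤ t + 1 by omega),
    show t + 1 - (1 + v) = t - v by omega]
  set Bc := range t \ B
  have hsplit : range t = B ∪ Bc := (union_sdiff_of_subset hB).symm
  have hdisj : Disjoint B Bc := disjoint_sdiff
  have hpairs : ∀ w, shiftCount B B w + shiftCount B Bc w + shiftCount Bc B w +
      shiftCount Bc Bc w = t - w := fun w => by
    rw [← shiftCount_range_range t w, hsplit, shiftCount_union_left _ _ hdisj,
      shiftCount_union_right _ _ hdisj, shiftCount_union_right _ _ hdisj]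
    ring
  have hsymm : ∀ w, w ≤ t → shiftCount B B w + shiftCount B Bc w +
      (shiftCount B B (t - w) + shiftCount Bc B (t - w)) = #B := fun w hw => by
    have := shiftCount_add_shiftCount_range hB hw
    rwa [hsplit, shiftCount_union_right _ _ hdisj, shiftCount_union_left _ _ hdisj] at this
  have h₁ := hsymm v hv
  have h₂ := hsymm (t - v) (Nat.sub_le t v)
  rw [Nat.sub_sub_self hv] at h₂
  have h₃ := hpairs v
  have h₄ := hpairs (t - v)
  omega

lemma shiftCount_charSet_of_ge (hB : B ⊆ range t) {v : ℕ} (hv : t ≤ v) :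
    shiftCount (charSet t B) (charSet t B) v = shiftCount (range t \ B) B (v - t) := by
  have hr : range t ⊆ range v := range_subset_range.2 hv
  rw [shiftCount_charSet, shiftCount_eq_zero_of_subset_range _ (hB.trans hr),
    shiftCount_eq_zero_of_subset_range _ (sdiff_subset.trans hr),
    shiftCount_image_add_right_of_le _ _ (by omega), show 1 + v - (t + 1) = v - t by omega]
  ring

end charSet

theorem posDiffs_charSet_eq {t : ℕ} {B₁ B₂ : Finset ℕ} (h₁ : B₁ ⊆ range t) (h₂ : B₂ ⊆ range t)
    (h : posDiffs B₁ (range t \ B₁) = posDiffs B₂ (range t \ B₂)) :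
    posDiffs (charSet t B₁) (charSet t B₁) = posDiffs (charSet t B₂) (charSet t B₂) := by
  have hX : ∀ w, shiftCount (range t \ B₁) B₁ w = shiftCount (range t \ B₂) B₂ w := by
    intro w
    rcases w.eq_zero_or_pos with rfl | hw
    · rw [shiftCount_zero_of_disjoint sdiff_disjoint, shiftCount_zero_of_disjoint sdiff_disjoint]
    · rw [← count_posDiffs _ _ hw, ← count_posDiffs _ _ hw, h]
  refine posDiffs_eq_of_shiftCount fun v _ => ?_
  rcases le_total v t with hv | hv
  · have e₁ := shiftCount_charSet_of_le h₁ hv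
    have e₂ := shiftCount_charSet_of_le h₂ hv
    rw [hX, hX] at e₁
    omega
  · rw [shiftCount_charSet_of_ge h₁ hv, shiftCount_charSet_of_ge h₂ hv, hX]

theorem stmt18_general (l m : List ℕ) (hl : IsPartition l) (hm : IsPartition m)
    (ht : l.length + l.headD 0 = m.length + m.headD 0)
    (hH : hookMultiset l = hookMultiset m) :
    envMissing l = envMissing m := by
  have hsub := hm.firstColHooks_subset_range
  have hHm := hm.hookMultiset_eq_posDiffs
  rw [← ht] at hsub hHm
  change posDiffs (charSet _ _) (charSet _ _) = posDiffs (charSet _ _) (charSet _ _)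
  rw [← ht]
  exact posDiffs_charSet_eq hl.firstColHooks_subset_range hsub
    (hl.hookMultiset_eq_posDiffs.symm.trans (hH.trans hHm))

/-- The missing-hook multiset of `E∞(λ)` is determined by `H(λ)`: clustered partitions
(with the same `t`) have clustered enveloping ∞-partitions. -/
theorem stmt18 (l m : List ℕ) (hl : IsPartition l) (hm : IsPartition m)
    (hnel : l ≠ []) (hnem : m ≠ [])
    (ht : l.length + l.headD 0 = m.length + m.headD 0)
    (hH : hookMultiset l = hookMultiset m) :
    envMissing l = envMissing m :=
  stmt18_general l m hl hm ht hH
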